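/- arXiv:2209.00913 — 4 statements merged into one kernel-verified Lean document; each statement's English description precedes it below -/
import Mathlib

section
/- Let c be a point in ℝ² and let S be a finite set of points in ℝ² such that every p ∈ S satisfies ‖p − c‖_∞ < 1 (sup norm) and any two distinct points p, q ∈ S satisfy ‖p − q‖_∞ ≥ 1. Then S has at most 4 elements. -/
/-- If every point of a finite set `S` in ℝ² (with the sup norm) is at sup-norm
distance less than 1 from a point `c`, and any two distinct points of `S` are at
sup-norm distance at least 1, then `S` has at most 4 elements. -/
theorem unit_squares_packing (c : Fin 2 → ℝ) (S : Finset (Fin 2 → ℝ))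
    (h_close : ∀ p ∈ S, ‖p - c‖ < 1)
    (h_sep : ∀ p ∈ S, ∀ q ∈ S, p ≠ q → 1 ≤ ‖p - q‖) :
    S.card ≤ 4 := by
  classical
  have key : Set.InjOn (fun p : Fin 2 → ℝ => (decide (c 0 ≤ p 0), decide (c 1 ≤ p 1)))
      (S : Set (Fin 2 → ℝ)) := by
    intro p hp q hq hpq
    by_contra hne
    have h1 := h_sep p hp q hq hne
    have hpc : ∀ i, |p i - c i| < 1 := by
      have := h_close p hp
      rw [pi_norm_lt_iff (by norm_num : (0:ℝ) < 1)] at this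
      intro i; simpa [Real.norm_eq_abs] using this i
    have hqc : ∀ i, |q i - c i| < 1 := by
      have := h_close q hq
      rw [pi_norm_lt_iff (by norm_num : (0:ℝ) < 1)] at this
      intro i; simpa [Real.norm_eq_abs] using this i
    have hlt : ‖p - q‖ < 1 := by
      rw [pi_norm_lt_iff (by norm_num : (0:ℝ) < 1)]
      intro i
      have hsame : decide (c i ≤ p i) = decide (c i ≤ q i) := by
        fin_cases i
        · exact congrArg Prod.fst hpq
        · exact congrArg Prod.snd hpq
      have hp' := hpc i
      have hq' := hqc i
      rw [abs_lt] at hp' hq'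
      simp only [Pi.sub_apply, Real.norm_eq_abs, abs_lt]
      by_cases h : c i ≤ p i
      · have h2 : c i ≤ q i := by
          by_contra h2
          simp [h, h2] at hsame
        constructor <;> linarith [hp'.2, hq'.2]
      · have h2 : ¬ c i ≤ q i := by
          by_contra h2
          simp [h, h2] at hsame
        push_neg at h h2
        constructor <;> linarith [hp'.1, hq'.1]
    linarith
  calc S.card = (S.image (fun p : Fin 2 → ℝ => (decide (c 0 ≤ p 0), decide (c 1 ≤ p 1)))).card := by
        rw [Finset.card_image_of_injOn key]
    _ ≤ Fintype.card (Bool × Bool) := Finset.card_le_univ _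
    _ = 4 := by simp
end

section
/- Let d > 0, let c be a point in the Euclidean plane ℝ², and let S be a finite set of points in ℝ² such that every p ∈ S satisfies ‖p − c‖ < d (Euclidean norm) and any two distinct points p, q ∈ S satisfy ‖p − q‖ ≥ d. Then S has at most 5 elements. -/
/-!
Seen from `c`, two points of `S` subtend an angle greater than `π / 3`: otherwise the third side of
the triangle they form with `c` would be shorter than the longer of the other two, hence shorter
than `d`. Measure the arguments of the points relative to one of them, `p₀`, in `(-π, π]`. Every
other point has argument in `(π / 3, π]` or in `(-π, -π / 3)`, and each of these arcs, of length
`2π / 3`, holds at most two points that are more than `π / 3` apart. So `#S ≤ 1 + 2 + 2`.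
-/

open Real InnerProductGeometry

lemma pi_div_three_lt_abs_of_cos_lt_half {t : ℝ} (h : cos t < 1 / 2) : π / 3 < |t| := by
  by_contra! hle
  have := cos_le_cos_of_nonneg_of_le_pi (abs_nonneg t) (by linarith [pi_pos]) hle
  rw [cos_abs, cos_pi_div_three] at this
  linarith

lemma pi_div_three_lt_angle_of_norm_lt_norm_sub {V : Type*} [NormedAddCommGroup V]
    [InnerProductSpace ℝ V] {u v : V} (hu : ‖u‖ < ‖u - v‖) (hv : ‖v‖ < ‖u - v‖) :
    π / 3 < angle u v := by
  have hcos : cos (angle u v) < 1 / 2 := by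
    have law := norm_sub_sq_eq_norm_sq_add_norm_sq_sub_two_mul_norm_mul_norm_mul_cos_angle u v
    -- otherwise the law of cosines gives `‖u - v‖ ≤ max ‖u‖ ‖v‖`
    by_contra! hge
    rcases le_total ‖u‖ ‖v‖ with h | h
    · nlinarith [norm_nonneg u, norm_nonneg (u - v), mul_nonneg (norm_nonneg u) (sub_nonneg.2 h)]
    · nlinarith [norm_nonneg v, norm_nonneg (u - v), mul_nonneg (norm_nonneg v) (sub_nonneg.2 h)]
  have habs : |angle u v| = angle u v := abs_of_nonneg (angle_nonneg u v)
  simpa only [habs] using pi_div_three_lt_abs_of_cos_lt_half hcos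

lemma Complex.cos_arg_sub_arg {x y : ℂ} (hx : x ≠ 0) (hy : y ≠ 0) :
    Real.cos (x.arg - y.arg) = Real.cos (angle x y) := by
  rw [Complex.angle_eq_abs_arg hx hy, cos_abs, ← Real.Angle.cos_coe, ← Real.Angle.cos_coe,
    Complex.arg_div_coe_angle hx hy, Real.Angle.coe_sub]

section Arcs

variable {ι : Type*} {s : Finset ι} {θ : ι → ℝ}

lemma Finset.card_le_two_of_mem_Icc_of_lt_abs_sub {a g : ℝ}
    (hmem : ∀ i ∈ s, θ i ∈ Set.Icc a (a + 2 * g))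
    (hsep : ∀ i ∈ s, ∀ j ∈ s, i ≠ j → g < |θ i - θ j|) : s.card ≤ 2 := by
  by_contra! h
  obtain ⟨i, hi, j, hj, k, hk, hij, hik, hjk⟩ := Finset.two_lt_card.1 h
  obtain ⟨hi₁, hi₂⟩ := hmem i hi
  obtain ⟨hj₁, hj₂⟩ := hmem j hj
  obtain ⟨hk₁, hk₂⟩ := hmem k hk
  rcases lt_abs.1 (hsep i hi j hj hij) with h₁ | h₁ <;>
    rcases lt_abs.1 (hsep i hi k hk hik) with h₂ | h₂ <;>
    rcases lt_abs.1 (hsep j hj k hk hjk) with h₃ | h₃ <;> linarith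

variable (hθ : ∀ i ∈ s, |θ i| ≤ π) (hcos : ∀ i ∈ s, ∀ j ∈ s, i ≠ j → cos (θ i - θ j) < 1 / 2)
  {i₀ : ι} (hi₀ : i₀ ∈ s) (hθi₀ : θ i₀ = 0)
include hθ hcos hi₀ hθi₀

lemma Finset.card_filter_pos_le_two_of_cos_sub_lt_half : (s.filter (0 < θ ·)).card ≤ 2 := by
  have hsep : ∀ i ∈ s, ∀ j ∈ s, i ≠ j → π / 3 < |θ i - θ j| :=
    fun i hi j hj hij ↦ pi_div_three_lt_abs_of_cos_lt_half (hcos i hi j hj hij)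
  have hfar : ∀ i ∈ s, 0 < θ i → π / 3 < θ i := by
    intro i hi hpos
    have hne : i ≠ i₀ := fun h ↦ by simp [h, hθi₀] at hpos
    simpa [hθi₀, abs_of_pos hpos] using hsep i hi i₀ hi₀ hne
  refine Finset.card_le_two_of_mem_Icc_of_lt_abs_sub (θ := θ) (a := π / 3) (g := π / 3) ?_
    fun i hi j hj hij ↦ hsep i (Finset.mem_of_mem_filter i hi) j (Finset.mem_of_mem_filter j hj) hij
  intro i hi
  rw [Finset.mem_filter] at hi
  exact ⟨(hfar i hi.1 hi.2).le, by linarith [(abs_le.1 (hθ i hi.1)).2]⟩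

lemma Finset.card_le_five_of_cos_sub_lt_half : s.card ≤ 5 := by
  classical
  have hpos := Finset.card_filter_pos_le_two_of_cos_sub_lt_half hθ hcos hi₀ hθi₀
  have hneg := Finset.card_filter_pos_le_two_of_cos_sub_lt_half (θ := (-θ ·))
    (by simpa only [abs_neg] using hθ)
    (fun i hi j hj hij ↦ by
      rw [neg_sub_neg, ← cos_neg, neg_sub]; exact hcos i hi j hj hij)
    hi₀ (by simp [hθi₀])
  have hcover : s ⊆ {i₀} ∪ s.filter (0 < θ ·) ∪ s.filter (0 < -θ ·) := by
    intro i hi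
    by_cases hii₀ : i = i₀
    · simp [hii₀]
    have hne : θ i ≠ 0 := fun h ↦ by
      have key := hcos i hi i₀ hi₀ hii₀
      norm_num [h, hθi₀] at key
    rcases hne.lt_or_gt with h | h <;> simp [hi, h]
  calc s.card ≤ ({i₀} ∪ s.filter (0 < θ ·) ∪ s.filter (0 < -θ ·)).card := Finset.card_le_card hcover
    _ ≤ 1 + 2 + 2 := by grw [Finset.card_union_le, Finset.card_union_le, hpos, hneg]; simp
    _ = 5 := rfl

end Arcs

lemma Complex.card_le_five_of_pi_div_three_lt_angle {T : Finset ℂ} (h0 : 0 ∉ T)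
    (hT : ∀ x ∈ T, ∀ y ∈ T, x ≠ y → π / 3 < angle x y) : T.card ≤ 5 := by
  obtain rfl | ⟨a, ha⟩ := T.eq_empty_or_nonempty
  · simp
  have hne : ∀ x ∈ T, x ≠ 0 := fun x hx ↦ ne_of_mem_of_not_mem hx h0
  refine Finset.card_le_five_of_cos_sub_lt_half (θ := fun x ↦ arg (x / a))
    (fun x _ ↦ abs_arg_le_pi _) (fun x hx y hy hxy ↦ ?_) ha (by simp [hne a ha])
  rw [cos_arg_sub_arg (div_ne_zero (hne x hx) (hne a ha)) (div_ne_zero (hne y hy) (hne a ha)),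
    angle_div_left_eq_angle_mul_right, div_mul_cancel₀ y (hne a ha), ← cos_pi_div_three]
  exact cos_lt_cos_of_nonneg_of_le_pi (by positivity) (angle_le_pi x y) (hT x hx y hy hxy)

theorem unit_disks_packing_general (d : ℝ)
    (c : EuclideanSpace ℝ (Fin 2)) (S : Finset (EuclideanSpace ℝ (Fin 2)))
    (h_close : ∀ p ∈ S, ‖p - c‖ < d)
    (h_sep : ∀ p ∈ S, ∀ q ∈ S, p ≠ q → d ≤ ‖p - q‖) :
    S.card ≤ 5 := by
  by_cases hS : S.card ≤ 1
  · omega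
  have hc : c ∉ S := fun hc ↦ by
    obtain ⟨p, hp, hpc⟩ := S.exists_mem_ne (by omega) c
    exact (h_sep p hp c hc hpc).not_gt (h_close p hp)
  let e : EuclideanSpace ℝ (Fin 2) ≃ₗᵢ[ℝ] ℂ := Complex.orthonormalBasisOneI.repr.symm
  let f : EuclideanSpace ℝ (Fin 2) → ℂ := fun p ↦ e (p - c)
  have hf : Function.Injective f := fun p q h ↦ sub_left_injective (e.injective h)
  rw [← Finset.card_image_of_injective S hf]
  refine Complex.card_le_five_of_pi_div_three_lt_angle ?_ ?_
  · simp only [Finset.mem_image, map_eq_zero_iff e e.injective, sub_eq_zero, f]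
    rintro ⟨p, hp, rfl⟩
    exact hc hp
  · simp only [Finset.mem_image, f]
    rintro _ ⟨p, hp, rfl⟩ _ ⟨q, hq, rfl⟩ hpq
    rw [← LinearIsometryEquiv.coe_toLinearIsometry, LinearIsometry.angle_map]
    have hpq' : d ≤ ‖(p - c) - (q - c)‖ := by
      rw [sub_sub_sub_cancel_right]; exact h_sep p hp q hq (ne_of_apply_ne f hpq)
    exact pi_div_three_lt_angle_of_norm_lt_norm_sub ((h_close p hp).trans_le hpq')
      ((h_close q hq).trans_le hpq')

/-- If every point of a finite set `S` in the Euclidean plane is at Euclidean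
distance less than `d` from a point `c`, and any two distinct points of `S` are
at Euclidean distance at least `d`, then `S` has at most 5 elements. -/
theorem unit_disks_packing (d : ℝ) (hd : 0 < d)
    (c : EuclideanSpace ℝ (Fin 2)) (S : Finset (EuclideanSpace ℝ (Fin 2)))
    (h_close : ∀ p ∈ S, ‖p - c‖ < d)
    (h_sep : ∀ p ∈ S, ∀ q ∈ S, p ≠ q → d ≤ ‖p - q‖) :
    S.card ≤ 5 :=
  unit_disks_packing_general d c S h_close h_sep
end

section
/- For every natural number m ≥ 2 and every real a > 0, with b = 2^m (as a real number): a·2^{−1}·2·(b² − 2) + a·(∑_{j=2}^{m−1} 2^{−j}·(2^j − 2^{j−1})·(b² − 2^j)) + a·(1/(b−1))·(2^m − 2^{m−1})·(b² − 2^m) = (a/2)·((m+1)·b² − b). -/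
lemma sum_term_eq (m : ℕ) (b : ℝ) :
    ∑ j ∈ Finset.Icc 2 (m-1),
        (2:ℝ)^(-(j:ℤ)) * ((2:ℝ)^j - 2^(j-1)) * (b^2 - 2^j)
      = ∑ j ∈ Finset.Icc 2 (m-1), (b^2/2 - (2:ℝ)^(j-1)) := by
  apply Finset.sum_congr rfl
  intro j hj
  have hj2 : 2 ≤ j := (Finset.mem_Icc.mp hj).1
  have h1 : (2:ℝ)^j = 2 * 2^(j-1) := by
    rw [← pow_succ']
    congr 1
    omega
  have h2 : (2:ℝ)^(-(j:ℤ)) = ((2:ℝ)^j)⁻¹ := by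
    rw [zpow_neg, zpow_natCast]
  rw [h2, h1]
  have hpos : (2:ℝ)^(j-1) ≠ 0 := by positivity
  field_simp
  ring

lemma mygeom_sum (n : ℕ) (hn : 1 ≤ n) :
    ∑ j ∈ Finset.Icc 2 n, (2:ℝ)^(j-1) = 2^n - 2 := by
  induction n with
  | zero => omega
  | succ k ih =>
    rcases Nat.lt_or_ge k 1 with h | h
    · interval_cases k
      · simp
    · rw [Finset.sum_Icc_succ_top (by omega), ih h]
      have : (2:ℝ)^(k+1) = 2^k * 2 := pow_succ 2 k
      simp only [Nat.add_sub_cancel]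
      rw [this]; ring

/-- Volume of the feasible solution in the refined lower-bound construction:
with `b = 2^m`, the total volume equals `(a/2)·((m+1)b² − b)`. -/
theorem refined_optimal_volume (m : ℕ) (hm : 2 ≤ m) (a : ℝ) (ha : 0 < a)
    (b : ℝ) (hb : b = 2^m) :
    a * (2:ℝ)^(-1:ℤ) * 2 * (b^2 - 2)
      + a * (∑ j ∈ Finset.Icc 2 (m-1),
          (2:ℝ)^(-(j:ℤ)) * ((2:ℝ)^j - 2^(j-1)) * (b^2 - 2^j))
      + a * (1/(b-1)) * ((2:ℝ)^m - 2^(m-1)) * (b^2 - 2^m)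
      = (a/2) * (((m:ℝ)+1) * b^2 - b) := by
  rw [sum_term_eq, Finset.sum_sub_distrib, Finset.sum_const, mygeom_sum (m-1) (by omega)]
  have hcard : (Finset.Icc 2 (m-1)).card = m - 2 := by
    rw [Nat.card_Icc]; omega
  rw [hcard]
  have h1 : ((m - 2 : ℕ) : ℝ) = (m : ℝ) - 2 := by
    have : (2:ℕ) ≤ m := hm
    push_cast [Nat.cast_sub this]
    ring
  have h2 : (2:ℝ)^m = 2 * 2^(m-1) := by
    rw [← pow_succ']; congr 1; omega
  have hb1 : b - 1 ≠ 0 := by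
    have : (4:ℝ) ≤ b := by
      rw [hb]
      calc (4:ℝ) = 2^2 := by norm_num
      _ ≤ 2^m := by apply pow_le_pow_right₀ <;> norm_num [hm]
    linarith
  rw [nsmul_eq_mul, h1]
  have h3 : (2:ℝ)^(-1:ℤ) = 1/2 := by norm_num
  have hb1' : (2:ℝ) * 2^(m-1) - 1 ≠ 0 := by rw [hb, h2] at hb1; exact hb1
  rw [h3, hb, h2]
  field_simp [hb1']
  ring
end

section
/- For every natural number m ≥ 2 and every real a ≥ 1, with b = 2^m (as a real number): (a/2)·((m+1)·b² − b) ≥ (a·m/4) · (1/2)·(2b² + m·b − b). -/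
/- The gap between the two sides is `b * ((2m + 4) b - (m² - m + 4)) / 8`, and `b ≥ m + 1` makes
the second factor at least `m² + 7m`. -/
theorem greedy_volume_mul_le_optimal_volume {m b : ℝ} (hm : 0 ≤ m) (hmb : m + 1 ≤ b) :
    m / 4 * ((1 / 2) * (2 * b ^ 2 + m * b - b)) ≤ (1 / 2) * ((m + 1) * b ^ 2 - b) := by
  have gap : 0 ≤ b * ((2 * m + 4) * b - (m ^ 2 - m + 4)) :=
    mul_nonneg (by linarith) (by nlinarith)
  linear_combination (1 / 8) * gap

theorem refined_ratio_general (m : ℕ) (a : ℝ) (ha : 1 ≤ a)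
    (b : ℝ) (hb : b = 2^m) :
    (a/2) * (((m:ℝ)+1) * b^2 - b) ≥ (a * (m:ℝ)/4) * ((1/2) * (2*b^2 + (m:ℝ)*b - b)) := by
  have hmb : (m : ℝ) + 1 ≤ b := by
    rw [hb]
    exact_mod_cast Nat.lt_two_pow_self
  calc (a * m / 4) * ((1 / 2) * (2 * b ^ 2 + m * b - b))
      = a * (m / 4 * ((1 / 2) * (2 * b ^ 2 + m * b - b))) := by ring
    _ ≤ a * ((1 / 2) * ((m + 1) * b ^ 2 - b)) :=
        mul_le_mul_of_nonneg_left (greedy_volume_mul_le_optimal_volume m.cast_nonneg hmb)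
          (by linarith)
    _ = (a / 2) * ((m + 1) * b ^ 2 - b) := by ring

/-- In the refined construction the optimal volume is at least `a·m/4` times
the greedy volume bound. -/
theorem refined_ratio (m : ℕ) (hm : 2 ≤ m) (a : ℝ) (ha : 1 ≤ a)
    (b : ℝ) (hb : b = 2^m) :
    (a/2) * (((m:ℝ)+1) * b^2 - b) ≥ (a * (m:ℝ)/4) * ((1/2) * (2*b^2 + (m:ℝ)*b - b)) :=
  refined_ratio_general m a ha b hb
end
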